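/- Let L be an e-cyclic residuated lattice and a ∈ L. Then C[a] = C[|a|] = {x ∈ L : |a|^n ≤ x ≤ |a|^n\e for some n ∈ ℕ} = {x ∈ L : |a|^n ≤ |x| for some n ∈ ℕ}. -/

import Mathlib

universe u

/-- A residuated lattice: a lattice-ordered monoid with left and right residuals.
`ldiv x z` is `x \ z` and `rdiv z y` is `z / y`. -/
class ResiduatedLattice (α : Type u) extends Lattice α, Monoid α where
  ldiv : α → α → α
  rdiv : α → α → α
  mul_le_iff_le_ldiv : ∀ x y z : α, x * y ≤ z ↔ y ≤ ldiv x z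
  mul_le_iff_le_rdiv : ∀ x y z : α, x * y ≤ z ↔ x ≤ rdiv z y

namespace ResiduatedLattice

variable {α : Type u} [ResiduatedLattice α]

/-- `L` is e-cyclic if `x \ e = e / x` for all `x`. -/
def ECyclic (α : Type u) [ResiduatedLattice α] : Prop :=
  ∀ x : α, ldiv x 1 = rdiv 1 x

/-- Absolute value: `|x| = x ⊓ (e / x) ⊓ e`. -/
def absv (x : α) : α := x ⊓ rdiv 1 x ⊓ 1

/-- A convex subalgebra: contains `e`, closed under all the operations, and order-convex. -/
structure IsConvexSubalgebra (H : Set α) : Prop where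
  one_mem : (1 : α) ∈ H
  mul_mem : ∀ ⦃x⦄, x ∈ H → ∀ ⦃y⦄, y ∈ H → x * y ∈ H
  sup_mem : ∀ ⦃x⦄, x ∈ H → ∀ ⦃y⦄, y ∈ H → x ⊔ y ∈ H
  inf_mem : ∀ ⦃x⦄, x ∈ H → ∀ ⦃y⦄, y ∈ H → x ⊓ y ∈ H
  ldiv_mem : ∀ ⦃x⦄, x ∈ H → ∀ ⦃y⦄, y ∈ H → ldiv x y ∈ H
  rdiv_mem : ∀ ⦃x⦄, x ∈ H → ∀ ⦃y⦄, y ∈ H → rdiv x y ∈ H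
  convex : ∀ ⦃a⦄, a ∈ H → ∀ ⦃b⦄, b ∈ H → ∀ ⦃x⦄, a ≤ x → x ≤ b → x ∈ H

/-- `C[S]`: the smallest convex subalgebra containing `S`. -/
def convexClosure (S : Set α) : Set α :=
  ⋂₀ {H : Set α | IsConvexSubalgebra H ∧ S ⊆ H}

end ResiduatedLattice

/-!
For a negative element `b ≤ e` the set `P b = ⋃ₙ [bⁿ, bⁿ\e]` is a convex subalgebra: if `x, y`
lie in `[c, c\e]` then `x·y`, `x\y`, `x/y`, `x ⊔ y`, `x ⊓ y` lie in `[c², c²\e]`, where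
e-cyclicity is used to turn `x ≤ c\e` into `x·c ≤ e`. Every convex subalgebra containing `b`
contains all `bⁿ` and `bⁿ\e`, hence `P b`, so `C[b] = P b`. Since `a` and `|a|` generate the
same convex subalgebras (`|a| ≤ a ≤ |a|\e`), `C[a] = P |a|`, and for negative `c` one has
`c ≤ |x|` iff `c ≤ x ≤ c\e`.
-/

namespace ResiduatedLattice

variable {α : Type u} [ResiduatedLattice α]

lemma gc_mul_ldiv (x : α) : GaloisConnection (x * ·) (ldiv x) :=
  mul_le_iff_le_ldiv x

lemma gc_mul_rdiv (y : α) : GaloisConnection (· * y) (rdiv · y) :=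
  fun x z => mul_le_iff_le_rdiv x y z

instance : MulLeftMono α :=
  ⟨fun z _ _ h => (gc_mul_ldiv z).monotone_l h⟩

instance : MulRightMono α :=
  ⟨fun z _ _ h => (gc_mul_rdiv z).monotone_l h⟩

lemma mul_ldiv_le (x z : α) : x * ldiv x z ≤ z :=
  (gc_mul_ldiv x).l_u_le z

lemma rdiv_mul_le (z y : α) : rdiv z y * y ≤ z :=
  (gc_mul_rdiv y).l_u_le z

lemma mul_le_one_of_le_ldiv {x c : α} (h : x ≤ ldiv c 1) : c * x ≤ 1 :=
  (mul_le_iff_le_ldiv c x 1).2 h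

lemma mul_le_one_of_le_ldiv_of_eCyclic (hec : ECyclic α) {x c : α} (h : x ≤ ldiv c 1) :
    x * c ≤ 1 :=
  (mul_le_iff_le_rdiv x c 1).2 (hec c ▸ h)

lemma absv_le_one (x : α) : absv x ≤ 1 := inf_le_right

lemma le_absv_iff {c x : α} (hc : c ≤ 1) : c ≤ absv x ↔ c ≤ x ∧ x ≤ ldiv c 1 := by
  rw [absv, le_inf_iff, le_inf_iff, ← mul_le_iff_le_rdiv, mul_le_iff_le_ldiv]
  tauto

section Interval

variable {c x y : α}

lemma mul_mem_Icc_mul_self (hx : x ∈ Set.Icc c (ldiv c 1)) (hy : y ∈ Set.Icc c (ldiv c 1)) :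
    x * y ∈ Set.Icc (c * c) (ldiv (c * c) 1) := by
  refine ⟨mul_le_mul' hx.1 hy.1, (mul_le_iff_le_ldiv _ _ _).1 ?_⟩
  calc c * c * (x * y) = c * ((c * x) * y) := by simp only [mul_assoc]
    _ ≤ c * (1 * y) := by gcongr; exact mul_le_one_of_le_ldiv hx.2
    _ ≤ 1 := by rw [one_mul]; exact mul_le_one_of_le_ldiv hy.2

lemma ldiv_mem_Icc_mul_self (hec : ECyclic α) (hx : x ∈ Set.Icc c (ldiv c 1))
    (hy : y ∈ Set.Icc c (ldiv c 1)) : ldiv x y ∈ Set.Icc (c * c) (ldiv (c * c) 1) := by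
  constructor
  · rw [← mul_le_iff_le_ldiv]
    calc x * (c * c) = (x * c) * c := (mul_assoc _ _ _).symm
      _ ≤ 1 * c := by gcongr; exact mul_le_one_of_le_ldiv_of_eCyclic hec hx.2
      _ ≤ y := by rw [one_mul]; exact hy.1
  · rw [← mul_le_iff_le_ldiv]
    calc c * c * ldiv x y = c * (c * ldiv x y) := mul_assoc _ _ _
      _ ≤ c * (x * ldiv x y) := by gcongr; exact hx.1
      _ ≤ c * y := by gcongr; exact mul_ldiv_le x y
      _ ≤ 1 := mul_le_one_of_le_ldiv hy.2

lemma rdiv_mem_Icc_mul_self (hec : ECyclic α) (hx : x ∈ Set.Icc c (ldiv c 1))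
    (hy : y ∈ Set.Icc c (ldiv c 1)) : rdiv x y ∈ Set.Icc (c * c) (ldiv (c * c) 1) := by
  constructor
  · rw [← mul_le_iff_le_rdiv]
    calc c * c * y = c * (c * y) := mul_assoc _ _ _
      _ ≤ c * 1 := by gcongr; exact mul_le_one_of_le_ldiv hy.2
      _ ≤ x := by rw [mul_one]; exact hx.1
  · rw [hec, ← mul_le_iff_le_rdiv]
    calc rdiv x y * (c * c) = rdiv x y * c * c := (mul_assoc _ _ _).symm
      _ ≤ rdiv x y * y * c := by gcongr; exact hy.1
      _ ≤ x * c := by gcongr; exact rdiv_mul_le x y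
      _ ≤ 1 := mul_le_one_of_le_ldiv_of_eCyclic hec hx.2

lemma Icc_ldiv_one_subset {d : α} (hdc : d ≤ c) :
    Set.Icc c (ldiv c 1) ⊆ Set.Icc d (ldiv d 1) := fun _ hx =>
  ⟨hdc.trans hx.1, (mul_le_iff_le_ldiv _ _ _).1
    ((mul_le_mul_left hdc _).trans (mul_le_one_of_le_ldiv hx.2))⟩

end Interval

def powerInterval (b : α) : Set α :=
  {x | ∃ n : ℕ, x ∈ Set.Icc (b ^ n) (ldiv (b ^ n) 1)}

section PowerInterval

variable {b x y : α}

lemma mem_powerInterval_of_mem_Icc_pow_mul_self {n : ℕ}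
    (h : x ∈ Set.Icc (b ^ n * b ^ n) (ldiv (b ^ n * b ^ n) 1)) : x ∈ powerInterval b :=
  ⟨n + n, by rwa [pow_add]⟩

lemma exists_mem_Icc_pow_of_mem_powerInterval (hb : b ≤ 1) (hx : x ∈ powerInterval b)
    (hy : y ∈ powerInterval b) :
    ∃ n : ℕ, x ∈ Set.Icc (b ^ n) (ldiv (b ^ n) 1) ∧ y ∈ Set.Icc (b ^ n) (ldiv (b ^ n) 1) := by
  obtain ⟨n, hxn⟩ := hx
  obtain ⟨m, hym⟩ := hy
  exact ⟨max n m,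
    Icc_ldiv_one_subset (pow_le_pow_right_of_le_one' hb (le_max_left n m)) hxn,
    Icc_ldiv_one_subset (pow_le_pow_right_of_le_one' hb (le_max_right n m)) hym⟩

lemma one_mem_powerInterval : (1 : α) ∈ powerInterval b :=
  ⟨0, by rw [pow_zero]; exact ⟨le_rfl, (mul_le_iff_le_ldiv _ _ _).1 (mul_one 1).le⟩⟩

lemma isConvexSubalgebra_powerInterval (hec : ECyclic α) (hb : b ≤ 1) :
    IsConvexSubalgebra (powerInterval b) where
  one_mem := one_mem_powerInterval
  mul_mem _ hx _ hy := by
    obtain ⟨n, hxn, hyn⟩ := exists_mem_Icc_pow_of_mem_powerInterval hb hx hy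
    exact mem_powerInterval_of_mem_Icc_pow_mul_self (mul_mem_Icc_mul_self hxn hyn)
  sup_mem _ hx _ hy := by
    obtain ⟨n, hxn, hyn⟩ := exists_mem_Icc_pow_of_mem_powerInterval hb hx hy
    exact ⟨n, le_sup_of_le_left hxn.1, sup_le hxn.2 hyn.2⟩
  inf_mem _ hx _ hy := by
    obtain ⟨n, hxn, hyn⟩ := exists_mem_Icc_pow_of_mem_powerInterval hb hx hy
    exact ⟨n, le_inf hxn.1 hyn.1, inf_le_of_left_le hxn.2⟩
  ldiv_mem _ hx _ hy := by
    obtain ⟨n, hxn, hyn⟩ := exists_mem_Icc_pow_of_mem_powerInterval hb hx hy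
    exact mem_powerInterval_of_mem_Icc_pow_mul_self (ldiv_mem_Icc_mul_self hec hxn hyn)
  rdiv_mem _ hx _ hy := by
    obtain ⟨n, hxn, hyn⟩ := exists_mem_Icc_pow_of_mem_powerInterval hb hx hy
    exact mem_powerInterval_of_mem_Icc_pow_mul_self (rdiv_mem_Icc_mul_self hec hxn hyn)
  convex _ hu _ hv _ hux hxv := by
    obtain ⟨n, hun, hvn⟩ := exists_mem_Icc_pow_of_mem_powerInterval hb hu hv
    exact ⟨n, hun.1.trans hux, hxv.trans hvn.2⟩

lemma self_mem_powerInterval_absv (a : α) : a ∈ powerInterval (absv a) :=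
  ⟨1, by rw [pow_one]; exact (le_absv_iff (absv_le_one a)).1 le_rfl⟩

lemma self_mem_powerInterval (hb : b ≤ 1) : b ∈ powerInterval b :=
  ⟨1, by rw [pow_one]; exact ⟨le_rfl, (mul_le_iff_le_ldiv _ _ _).1 (mul_le_one' hb hb)⟩⟩

lemma powerInterval_eq_setOf_pow_le_absv (hb : b ≤ 1) :
    powerInterval b = {x | ∃ n : ℕ, b ^ n ≤ absv x} := by
  ext x
  exact exists_congr fun n => (le_absv_iff (pow_le_one' hb n)).symm

end PowerInterval

namespace IsConvexSubalgebra

variable {H : Set α}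

lemma pow_mem (hH : IsConvexSubalgebra H) {b : α} (hb : b ∈ H) (n : ℕ) : b ^ n ∈ H := by
  induction n with
  | zero => simpa using hH.one_mem
  | succ n ih => rw [pow_succ]; exact hH.mul_mem ih hb

lemma absv_mem (hH : IsConvexSubalgebra H) {a : α} (ha : a ∈ H) : absv a ∈ H :=
  hH.inf_mem (hH.inf_mem ha (hH.rdiv_mem hH.one_mem ha)) hH.one_mem

lemma powerInterval_subset (hH : IsConvexSubalgebra H) {b : α} (hb : b ∈ H) :
    powerInterval b ⊆ H := by
  rintro x ⟨n, hxn⟩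
  exact hH.convex (hH.pow_mem hb n) (hH.ldiv_mem (hH.pow_mem hb n) hH.one_mem) hxn.1 hxn.2

end IsConvexSubalgebra

lemma convexClosure_eq_of_forall_subset {S H : Set α} (hH : IsConvexSubalgebra H) (hSH : S ⊆ H)
    (hmin : ∀ K : Set α, IsConvexSubalgebra K → S ⊆ K → H ⊆ K) : convexClosure S = H :=
  Set.Subset.antisymm (Set.sInter_subset_of_mem ⟨hH, hSH⟩)
    (Set.subset_sInter fun K hK => hmin K hK.1 hK.2)

lemma convexClosure_singleton_eq_powerInterval_absv (hec : ECyclic α) (a : α) :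
    convexClosure {a} = powerInterval (absv a) :=
  convexClosure_eq_of_forall_subset (isConvexSubalgebra_powerInterval hec (absv_le_one a))
    (Set.singleton_subset_iff.2 (self_mem_powerInterval_absv a))
    fun _ hK haK => hK.powerInterval_subset (hK.absv_mem (haK rfl))

lemma convexClosure_singleton_eq_powerInterval (hec : ECyclic α) {b : α} (hb : b ≤ 1) :
    convexClosure {b} = powerInterval b :=
  convexClosure_eq_of_forall_subset (isConvexSubalgebra_powerInterval hec hb)
    (Set.singleton_subset_iff.2 (self_mem_powerInterval hb))
    fun _ hK hbK => hK.powerInterval_subset (hbK rfl)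

end ResiduatedLattice

open ResiduatedLattice

/-- element-wise description of the principal convex subalgebra `C[a]`. -/
theorem stmt1 {α : Type u} [ResiduatedLattice α] (hec : ECyclic α) (a : α) :
    convexClosure {a} = convexClosure {absv a} ∧
    convexClosure {a} = {x : α | ∃ n : ℕ, absv a ^ n ≤ x ∧ x ≤ ldiv (absv a ^ n) 1} ∧
    convexClosure {a} = {x : α | ∃ n : ℕ, absv a ^ n ≤ absv x} := by
  have hC := convexClosure_singleton_eq_powerInterval_absv hec a
  refine ⟨hC.trans (convexClosure_singleton_eq_powerInterval hec (absv_le_one a)).symm, hC, ?_⟩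
  rw [hC, powerInterval_eq_setOf_pow_le_absv (absv_le_one a)]
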